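/- arXiv:math/0611898 — 4 statements merged into one kernel-verified Lean document; each statement's English description precedes it below -/
import Mathlib

section
/- Let r ≥ 2 and b be integers with 0 < b < r and gcd(b, r) = 1. Then for all integers m ≥ 1 and n ≥ 1 one has l(r, b, m + 2n) ≥ l(r, b, m) + n·l(r, b, 2); moreover, if r = 2 then equality holds. Consequently, for any finite multiset B of baskets, the total correction term l(m) := ∑_{Q ∈ B} l(Q, m) satisfies l(m + 2n) ≥ l(m) + n·l(2). -/
/-- The Reid correction term `l(r, b, m) = ∑_{j=1}^{m-1} \overline{bj}(r-\overline{bj})/(2r)`,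
where `\overline{bj}` is the smallest non-negative residue of `b*j` mod `r`.
(The `j = 0` term vanishes, so we may sum over `j ∈ range m`.) -/
def reidL (r b m : ℕ) : ℚ :=
  ∑ j ∈ Finset.range m,
    (((b * j) % r : ℕ) : ℚ) * ((r : ℚ) - (((b * j) % r : ℕ) : ℚ)) / (2 * r)

/-- A basket of type `1/r(a, -a, 1)`: a pair of integers `(r, a)` with `r ≥ 2`,
`0 < a < r` and `gcd(a, r) = 1`. -/
structure Basket where
  r : ℕ
  a : ℕ
  two_le_r : 2 ≤ r
  a_pos : 0 < a
  a_lt_r : a < r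
  coprime : Nat.Coprime a r

/-- The unique `b` with `0 < b < r` and `a * b ≡ 1 (mod r)`. -/
def Basket.binv (Q : Basket) : ℕ := ((Q.a : ZMod Q.r)⁻¹).val

/-- The correction term `l(Q, m)` of a basket. -/
def Basket.l (Q : Basket) (m : ℕ) : ℚ := reidL Q.r Q.binv m

/-- `Δ_n(Q) := n² l(Q,2) + l(Q,n) - l(Q,n+1)`. -/
def Basket.delta (Q : Basket) (n : ℕ) : ℚ :=
  (n : ℚ) ^ 2 * Q.l 2 + Q.l n - Q.l (n + 1)

/-- A formal basket datum with `χ = 1`: a finite multiset of baskets together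
with a positive rational number `K`. -/
structure FormalDatum where
  B : Multiset Basket
  K : ℚ
  K_pos : 0 < K

/-- The formal plurigenus `P(m) = (1/12)m(m-1)(2m-1)K - (2m-1) + ∑_{Q ∈ B} l(Q, m)`. -/
def FormalDatum.P (D : FormalDatum) (m : ℕ) : ℚ :=
  (1 / 12 : ℚ) * m * (m - 1) * (2 * m - 1) * D.K - (2 * m - 1)
    + (D.B.map (fun Q => Q.l m)).sum

/-- The total correction term of a finite multiset of baskets. -/
def totalL (B : Multiset Basket) (m : ℕ) : ℚ := (B.map (fun Q => Q.l m)).sum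

def F (r b j : ℕ) : ℚ :=
  (((b * j) % r : ℕ) : ℚ) * ((r : ℚ) - (((b * j) % r : ℕ) : ℚ)) / (2 * r)

lemma reidL_eq_sum (r b m : ℕ) : reidL r b m = ∑ j ∈ Finset.range m, F r b j := rfl

lemma F_zero (r b : ℕ) : F r b 0 = 0 := by simp [F]

lemma reidL_two (r b : ℕ) : reidL r b 2 = F r b 1 := by
  simp [reidL_eq_sum, Finset.sum_range_succ, F_zero]

lemma F_pair_ge (r b : ℕ) (hr : 2 ≤ r) (hbr : b < r) (j : ℕ) :
    F r b 1 ≤ F r b j + F r b (j + 1) := by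
  have hrpos : 0 < r := by omega
  have hx : b * j % r < r := Nat.mod_lt _ hrpos
  have hrel : b * (j + 1) % r = (b * j % r + b) % r := by
    rw [Nat.mul_succ, Nat.add_mod, Nat.mod_eq_of_lt hbr]
  have hb1 : b * 1 % r = b := by rw [Nat.mul_one, Nat.mod_eq_of_lt hbr]
  set x := b * j % r with hxdef
  unfold F
  rw [hb1, hrel, ← add_div, div_le_div_iff_of_pos_right (by positivity)]
  rcases lt_or_ge (x + b) r with hcase | hcase
  · have hy : (x + b) % r = x + b := Nat.mod_eq_of_lt hcase
    rw [hy]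
    have h1 : (0:ℚ) ≤ (x:ℚ) := by positivity
    have h2 : ((x:ℚ) + b) ≤ r := by exact_mod_cast hcase.le
    push_cast
    nlinarith [mul_nonneg h1 (by linarith : (0:ℚ) ≤ (r:ℚ) - x - b)]
  · have hlt : x + b < 2 * r := by omega
    have hy : (x + b) % r = x + b - r := by
      rw [Nat.mod_eq_sub_mod hcase, Nat.mod_eq_of_lt (by omega)]
    rw [hy]
    have hyQ : (((x + b - r : ℕ)) : ℚ) = (x:ℚ) + b - r := by
      push_cast [Nat.cast_sub hcase]
      ring
    rw [hyQ]
    have h1 : (0:ℚ) ≤ (r:ℚ) - x := by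
      have : (x:ℚ) ≤ r := by exact_mod_cast hx.le
      linarith
    have h2 : (r:ℚ) ≤ (x:ℚ) + b := by exact_mod_cast hcase
    nlinarith [mul_nonneg h1 (by linarith : (0:ℚ) ≤ (x:ℚ) + b - r)]

lemma F_pair_eq (b : ℕ) (hb0 : 0 < b) (hbr : b < 2) (j : ℕ) :
    F 2 b j + F 2 b (j + 1) = F 2 b 1 := by
  have hb : b = 1 := by omega
  subst hb
  rcases Nat.mod_two_eq_zero_or_one j with h | h
  · have h2 : (j + 1) % 2 = 1 := by omega
    simp only [F, one_mul, h, h2]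
    norm_num
  · have h2 : (j + 1) % 2 = 0 := by omega
    simp only [F, one_mul, h, h2]
    norm_num

lemma reidL_step (r b m : ℕ) :
    reidL r b (m + 2) = reidL r b m + F r b m + F r b (m + 1) := by
  simp [reidL_eq_sum, Finset.sum_range_succ]

lemma reidL_main (r b : ℕ) (hr : 2 ≤ r) (hbr : b < r) (m n : ℕ) :
    reidL r b m + (n : ℚ) * reidL r b 2 ≤ reidL r b (m + 2 * n) := by
  induction n with
  | zero => simp
  | succ n ih =>
    have h2 := F_pair_ge r b hr hbr (m + 2 * n)
    push_cast
    calc reidL r b m + ((n : ℚ) + 1) * reidL r b 2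
        = (reidL r b m + (n : ℚ) * reidL r b 2) + reidL r b 2 := by ring
      _ ≤ reidL r b (m + 2 * n) + (F r b (m + 2 * n) + F r b (m + 2 * n + 1)) := by
          exact add_le_add ih (by rw [reidL_two]; exact h2)
      _ = reidL r b (m + 2 * (n + 1)) := by
          rw [show m + 2 * (n + 1) = (m + 2 * n) + 2 by ring, reidL_step]; ring

lemma reidL_main_eq (b : ℕ) (hb0 : 0 < b) (hbr : b < 2) (m n : ℕ) :
    reidL 2 b (m + 2 * n) = reidL 2 b m + (n : ℚ) * reidL 2 b 2 := by
  induction n with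
  | zero => simp
  | succ n ih =>
    have h2 := F_pair_eq b hb0 hbr (m + 2 * n)
    push_cast
    calc reidL 2 b (m + 2 * (n + 1))
        = reidL 2 b (m + 2 * n) + (F 2 b (m + 2 * n) + F 2 b (m + 2 * n + 1)) := by
          rw [show m + 2 * (n + 1) = (m + 2 * n) + 2 by ring, reidL_step]; ring
      _ = (reidL 2 b m + (n : ℚ) * reidL 2 b 2) + F 2 b 1 := by rw [ih, h2]
      _ = reidL 2 b m + ((n : ℚ) + 1) * reidL 2 b 2 := by rw [reidL_two]; ring

/-- For `r ≥ 2`, `0 < b < r`, `gcd(b,r) = 1` and integers `m, n ≥ 1`, one has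
`l(r, b, m + 2n) ≥ l(r, b, m) + n·l(r, b, 2)`, with equality whenever `r = 2`;
consequently the total correction term of any finite multiset of baskets satisfies
`l(m + 2n) ≥ l(m) + n·l(2)`. -/
theorem reidL_add_two_mul_ge (r b : ℕ) (hr : 2 ≤ r) (hb0 : 0 < b) (hbr : b < r)
    (hcop : Nat.Coprime b r) (m n : ℕ) (hm : 1 ≤ m) (hn : 1 ≤ n) :
    reidL r b m + (n : ℚ) * reidL r b 2 ≤ reidL r b (m + 2 * n) ∧
    (r = 2 → reidL r b (m + 2 * n) = reidL r b m + (n : ℚ) * reidL r b 2) ∧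
    ∀ B : Multiset Basket, totalL B m + (n : ℚ) * totalL B 2 ≤ totalL B (m + 2 * n) := by
  refine ⟨reidL_main r b hr hbr m n, fun h2 => ?_, fun B => ?_⟩
  · subst h2
    exact reidL_main_eq b hb0 hbr m n
  · induction B using Multiset.induction with
    | empty => simp [totalL]
    | cons Q s ih =>
      have hblt : Q.binv < Q.r := by
        haveI : NeZero Q.r := ⟨by have := Q.two_le_r; omega⟩
        exact ZMod.val_lt _
      have hQ : Q.l m + (n : ℚ) * Q.l 2 ≤ Q.l (m + 2 * n) :=
        reidL_main Q.r Q.binv Q.two_le_r hblt m n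
      simp only [totalL, Multiset.map_cons, Multiset.sum_cons] at *
      rw [mul_add]
      linarith
end

section
/- Let r ≥ 2 and a be integers with 0 < a < r and gcd(a, r) = 1, and let n be a positive integer with n ≤ ⌊(r+1)/2⌋. Then l(1/r(a, -a, 1), n) ≥ l(1/r(1, -1, 1), n), i.e. ∑_{j=1}^{n-1} \overline{bj}(r - \overline{bj})/(2r) ≥ ∑_{j=1}^{n-1} j(r - j)/(2r), where b is the inverse of a modulo r. -/
/-! The residue of `b j` closest to `0` has absolute value `s_j ≤ r / 2`, and `j ↦ s_j` is
injective on `0 ≤ j < n`: a collision forces `j ≡ ±k (mod r)`, impossible for `j ≠ k` with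
`j + k < r`. As `w(s) = s (r - s) / (2r)` is invariant under `s ↦ r - s`, the `j`-th term of
`l(Q, n)` is `w(s_j)`. Thus `l(Q, n)` is a sum of `w` over `n` distinct points of `[0, r/2]`, where
`w` is increasing, and so it dominates `∑_{j<n} w(j) = l(1/r(1,-1,1), n)`. -/

open Finset

def reidWeight (r s : ℕ) : ℚ := s * (r - s) / (2 * r)

lemma reidWeight_monotoneOn (r : ℕ) : MonotoneOn (reidWeight r) (Set.Iic (r / 2)) := by
  intro s hs t ht hst
  simp only [Set.mem_Iic] at hs ht
  have hsum : (s : ℚ) + t ≤ r := by exact_mod_cast (by omega : s + t ≤ r)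
  have hst' : (s : ℚ) ≤ t := by exact_mod_cast hst
  unfold reidWeight
  gcongr ?_ / _
  nlinarith

lemma reidWeight_sub_self {r s : ℕ} (hs : s ≤ r) : reidWeight r (r - s) = reidWeight r s := by
  unfold reidWeight
  push_cast [hs]
  ring

lemma ZMod.reidWeight_val {r : ℕ} [NeZero r] (x : ZMod r) :
    reidWeight r x.val = reidWeight r x.valMinAbs.natAbs := by
  rw [ZMod.valMinAbs_natAbs_eq_min]
  rcases min_choice x.val (r - x.val) with h | h <;> rw [h]
  rw [reidWeight_sub_self x.val_le]

lemma sum_range_card_le_sum_of_monotoneOn {M : Type*} [AddCommMonoid M] [PartialOrder M]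
    [IsOrderedAddMonoid M] {f : ℕ → M} {m : ℕ} (hf : MonotoneOn f (Set.Iic m))
    (S : Finset ℕ) (hS : ∀ s ∈ S, s ≤ m) : ∑ j ∈ range #S, f j ≤ ∑ s ∈ S, f s := by
  induction S using Finset.induction_on_max with
  | empty => simp
  | insert a S haS ih =>
    have ha : a ∉ S := fun h => (haS a h).false
    have hcard : #S ≤ a := by
      simpa using card_le_card fun x hx => mem_range.2 (haS x hx)
    have ham : a ≤ m := hS a (mem_insert_self a S)
    rw [card_insert_of_notMem ha, sum_range_succ, sum_insert ha, add_comm]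
    exact add_le_add (hf (Set.mem_Iic.2 (hcard.trans ham)) (Set.mem_Iic.2 ham) hcard)
      (ih fun s hs => hS s (mem_insert_of_mem hs))

lemma ZMod.injOn_natAbs_valMinAbs_mul {r : ℕ} {u : ZMod r} (hu : IsUnit u) {n : ℕ}
    (hn : n ≤ (r + 1) / 2) :
    Set.InjOn (fun j : ℕ => (u * j).valMinAbs.natAbs) (range n) := by
  intro j hj k hk hjk
  simp only [coe_range, Set.mem_Iio] at hj hk
  rcases ZMod.natAbs_valMinAbs_eq_natAbs_valMinAbs.1 hjk with h | h
  · rw [hu.mul_right_inj, ZMod.natCast_eq_natCast_iff'] at h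
    rwa [Nat.mod_eq_of_lt (by omega), Nat.mod_eq_of_lt (by omega)] at h
  · rw [← mul_neg, hu.mul_right_inj, eq_neg_iff_add_eq_zero, ← Nat.cast_add,
      ZMod.natCast_eq_zero_iff] at h
    have := Nat.eq_zero_of_dvd_of_lt h (by omega)
    omega

lemma ZMod.sum_range_reidWeight_le_sum_reidWeight_val_mul {r : ℕ} [NeZero r] {u : ZMod r}
    (hu : IsUnit u) {n : ℕ} (hn : n ≤ (r + 1) / 2) :
    ∑ j ∈ range n, reidWeight r j ≤ ∑ j ∈ range n, reidWeight r (u * j).val := by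
  set g : ℕ → ℕ := fun j => (u * j).valMinAbs.natAbs
  have hg := ZMod.injOn_natAbs_valMinAbs_mul hu hn
  calc ∑ j ∈ range n, reidWeight r j
      ≤ ∑ s ∈ (range n).image g, reidWeight r s := by
        have := sum_range_card_le_sum_of_monotoneOn (reidWeight_monotoneOn r)
          ((range n).image g) (by simp [g, ZMod.natAbs_valMinAbs_le])
        rwa [card_image_of_injOn hg, card_range] at this
    _ = ∑ j ∈ range n, reidWeight r (g j) := sum_image hg
    _ = ∑ j ∈ range n, reidWeight r (u * j).val :=
        sum_congr rfl fun j _ => (ZMod.reidWeight_val _).symm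

lemma sum_range_reidWeight_le_sum_reidWeight_mul_mod {r b n : ℕ} (hb : b.Coprime r)
    (hn : n ≤ (r + 1) / 2) :
    ∑ j ∈ range n, reidWeight r j ≤ ∑ j ∈ range n, reidWeight r (b * j % r) := by
  rcases Nat.eq_zero_or_pos r with rfl | hr
  · simp [show n = 0 by omega]
  have : NeZero r := ⟨hr.ne'⟩
  simpa [← Nat.cast_mul, ZMod.val_natCast] using
    ZMod.sum_range_reidWeight_le_sum_reidWeight_val_mul ((ZMod.isUnit_iff_coprime b r).2 hb) hn

lemma reidL_one_eq_sum_reidWeight {r n : ℕ} (hn : n ≤ r) :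
    reidL r 1 n = ∑ j ∈ range n, reidWeight r j :=
  sum_congr rfl fun j hj => by rw [one_mul, Nat.mod_eq_of_lt (by simp at hj; omega)]; rfl

lemma Basket.binv_coprime (Q : Basket) : Q.binv.Coprime Q.r := by
  have : NeZero Q.r := ⟨by have := Q.two_le_r; omega⟩
  rw [← ZMod.isUnit_iff_coprime, Basket.binv, ZMod.natCast_zmod_val]
  exact .of_mul_eq_one_right _
    (ZMod.mul_inv_of_unit _ ((ZMod.isUnit_iff_coprime _ _).2 Q.coprime))

theorem basket_l_ge_reidL_one_general (Q : Basket) (n : ℕ)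
    (hle : n ≤ (Q.r + 1) / 2) :
    reidL Q.r 1 n ≤ Q.l n ∧
    ∑ j ∈ Finset.range n, (j : ℚ) * ((Q.r : ℚ) - (j : ℚ)) / (2 * Q.r) ≤
      ∑ j ∈ Finset.range n,
        (((Q.binv * j) % Q.r : ℕ) : ℚ) * ((Q.r : ℚ) - (((Q.binv * j) % Q.r : ℕ) : ℚ))
          / (2 * Q.r) := by
  have key := sum_range_reidWeight_le_sum_reidWeight_mul_mod Q.binv_coprime hle
  refine ⟨?_, key⟩
  rw [reidL_one_eq_sum_reidWeight (by omega)]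
  exact key

/-- For a basket `Q = 1/r(a, -a, 1)` and `1 ≤ n ≤ ⌊(r+1)/2⌋`, one has
`l(1/r(a,-a,1), n) ≥ l(1/r(1,-1,1), n)`, i.e.
`∑_{j=1}^{n-1} \overline{bj}(r-\overline{bj})/(2r) ≥ ∑_{j=1}^{n-1} j(r-j)/(2r)`,
where `b` is the inverse of `a` mod `r`. -/
theorem basket_l_ge_reidL_one (Q : Basket) (n : ℕ) (hn : 0 < n)
    (hle : n ≤ (Q.r + 1) / 2) :
    reidL Q.r 1 n ≤ Q.l n ∧
    ∑ j ∈ Finset.range n, (j : ℚ) * ((Q.r : ℚ) - (j : ℚ)) / (2 * Q.r) ≤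
      ∑ j ∈ Finset.range n,
        (((Q.binv * j) % Q.r : ℕ) : ℚ) * ((Q.r : ℚ) - (((Q.binv * j) % Q.r : ℕ) : ℚ))
          / (2 * Q.r) :=
  basket_l_ge_reidL_one_general Q n hle
end

section
/- Let Q be a basket of type 1/r(a, -a, 1) with index r satisfying 28 ≤ r ≤ 36. Then l(Q, 18) > 37. -/
/-!
Clearing the denominator `2r`, the claim is `∑_{j<18} \overline{bj}(r - \overline{bj}) > 74 r`,
a statement about finitely many pairs `(r, b)` with `b` a unit mod `r`, checked by evaluation.
(Using only that the seventeen residues `\overline{bj}` are distinct and non-zero gives the lower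
bound `81 r - 489`, which is too weak for `r ≤ 69`.)
-/

def reidNumerator (r b m : ℕ) : ℕ :=
  ∑ j ∈ Finset.range m, (b * j % r) * (r - b * j % r)

lemma reidL_eq_reidNumerator_div (r b m : ℕ) :
    reidL r b m = reidNumerator r b m / (2 * r) := by
  rcases r.eq_zero_or_pos with rfl | hr
  · simp [reidL]
  rw [reidL, reidNumerator, Nat.cast_sum, Finset.sum_div]
  refine Finset.sum_congr rfl fun j _ => ?_
  push_cast [Nat.cast_sub (Nat.mod_lt _ hr).le]
  ring

lemma lt_reidNumerator_eighteen :
    ∀ r ∈ Finset.Icc 28 36, ∀ b ∈ Finset.range r, b.Coprime r → 74 * r < reidNumerator r b 18 := by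
  decide

namespace Basket

instance (Q : Basket) : NeZero Q.r := ⟨by have := Q.two_le_r; omega⟩

lemma binv_lt (Q : Basket) : Q.binv < Q.r := ZMod.val_lt _

lemma binv_coprime_s5 (Q : Basket) : Q.binv.Coprime Q.r := by
  have ha : IsUnit (Q.a : ZMod Q.r) := (ZMod.isUnit_iff_coprime _ _).mpr Q.coprime
  rw [← ZMod.isUnit_iff_coprime, binv, ZMod.natCast_zmod_val]
  exact .of_mul_eq_one_right _ (ZMod.mul_inv_of_unit _ ha)

end Basket

/-- For a basket `Q` of index `28 ≤ r ≤ 36`, `l(Q, 18) > 37`. -/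
theorem basket_l_eighteen_gt_of_index_between (Q : Basket) (h1 : 28 ≤ Q.r)
    (h2 : Q.r ≤ 36) : 37 < Q.l 18 := by
  have hnum : (74 * Q.r : ℚ) < reidNumerator Q.r Q.binv 18 := by
    exact_mod_cast lt_reidNumerator_eighteen Q.r (Finset.mem_Icc.mpr ⟨h1, h2⟩) Q.binv
      (Finset.mem_range.mpr Q.binv_lt) Q.binv_coprime_s5
  rw [Basket.l, reidL_eq_reidNumerator_div, lt_div_iff₀ (by positivity)]
  linarith
end

section
/- Let (B, K) be a formal basket datum with χ = 1 whose formal plurigenera P(m) are non-negative integers for every integer m ≥ 2. If P(2) ≥ 1, then P(2n+1) ≥ n - 1 for every integer n ≥ 2. -/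
private lemma reid_key (r x z : ℕ) (hr : 0 < r) (hx : x < r) (hz : z < r) :
    (z : ℚ) * ((r : ℚ) - (z : ℚ)) / (2 * r) ≤
      (x : ℚ) * ((r : ℚ) - (x : ℚ)) / (2 * r)
        + (((x + z) % r : ℕ) : ℚ) * ((r : ℚ) - (((x + z) % r : ℕ) : ℚ)) / (2 * r) := by
  have hrq : (0 : ℚ) < r := by exact_mod_cast hr
  have hxq : (x : ℚ) < r := by exact_mod_cast hx
  have hzq : (z : ℚ) < r := by exact_mod_cast hz
  rw [← add_div, div_le_div_iff₀ (by positivity) (by positivity)]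
  rcases lt_or_ge (x + z) r with h | h
  · rw [Nat.mod_eq_of_lt h]
    have hq : (x : ℚ) + z < r := by exact_mod_cast h
    push_cast
    nlinarith [mul_nonneg (Nat.cast_nonneg (α := ℚ) x) (sub_nonneg.mpr hq.le), hrq]
  · have h2 : x + z - r < r := by omega
    have : (x + z) % r = x + z - r := by
      rw [Nat.mod_eq_sub_mod h, Nat.mod_eq_of_lt h2]
    rw [this]
    have hc : ((x + z - r : ℕ) : ℚ) = (x : ℚ) + z - r := by
      push_cast [Nat.cast_sub h]; ring
    rw [hc]
    have hq : (r : ℚ) ≤ (x : ℚ) + z := by exact_mod_cast h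
    nlinarith [mul_nonneg (sub_nonneg.mpr hq) (sub_nonneg.mpr hxq.le), hrq]

private lemma Basket.l_two_add (Q : Basket) (m : ℕ) :
    Q.l 2 + Q.l m ≤ Q.l (m + 2) := by
  have hr : 0 < Q.r := by have := Q.two_le_r; omega
  have key := reid_key Q.r (Q.binv * m % Q.r) (Q.binv % Q.r) hr
    (Nat.mod_lt _ hr) (Nat.mod_lt _ hr)
  rw [show (Q.binv * m % Q.r + Q.binv % Q.r) % Q.r = Q.binv * (m + 1) % Q.r by
    rw [← Nat.add_mod, Nat.mul_succ]] at key
  have h2 : Q.l 2 = ((Q.binv % Q.r : ℕ) : ℚ) * ((Q.r : ℚ) - ((Q.binv % Q.r : ℕ) : ℚ)) / (2 * Q.r) := by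
    simp [Basket.l, reidL, Finset.sum_range_succ]
  have hsucc : Q.l (m + 2) = Q.l m
      + ((Q.binv * m % Q.r : ℕ) : ℚ) * ((Q.r : ℚ) - ((Q.binv * m % Q.r : ℕ) : ℚ)) / (2 * Q.r)
      + ((Q.binv * (m + 1) % Q.r : ℕ) : ℚ) * ((Q.r : ℚ) - ((Q.binv * (m + 1) % Q.r : ℕ) : ℚ)) / (2 * Q.r) := by
    show reidL Q.r Q.binv (m + 1 + 1) = _
    rw [reidL, Finset.sum_range_succ, Finset.sum_range_succ]
    rfl
  rw [h2, hsucc]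
  linarith [key]

private lemma sum_l_le (D : FormalDatum) (m : ℕ) :
    (D.B.map (fun Q => Q.l 2)).sum + (D.B.map (fun Q => Q.l m)).sum
      ≤ (D.B.map (fun Q => Q.l (m + 2))).sum := by
  rw [← Multiset.sum_map_add]
  exact Multiset.sum_map_le_sum_map _ _ fun Q _ => Q.l_two_add m

private lemma P_lt_P_add_two (D : FormalDatum) (h2 : 1 ≤ D.P 2) (m : ℕ) (hm : 1 ≤ m) :
    D.P m < D.P (m + 2) := by
  have hs := sum_l_le D m
  have hK := D.K_pos
  have hm' : (1 : ℚ) ≤ m := by exact_mod_cast hm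
  unfold FormalDatum.P at h2 ⊢
  push_cast at h2 ⊢
  nlinarith [mul_pos hK (show (0 : ℚ) < (m : ℚ) ^ 2 + m by nlinarith)]


/-- If the formal plurigenera of a formal basket datum with `χ = 1` are
non-negative integers and `P(2) ≥ 1`, then `P(2n+1) ≥ n - 1` for all `n ≥ 2`. -/
theorem formal_P_odd_ge (D : FormalDatum)
    (hint : ∀ m : ℕ, 2 ≤ m → ∃ k : ℕ, D.P m = (k : ℚ))
    (h2 : 1 ≤ D.P 2) :
    ∀ n : ℕ, 2 ≤ n → (n : ℚ) - 1 ≤ D.P (2 * n + 1) := by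
  intro n hn
  induction n, hn using Nat.le_induction with
  | base =>
    obtain ⟨k3, hk3⟩ := hint 3 (by norm_num)
    obtain ⟨k5, hk5⟩ := hint 5 (by norm_num)
    have h35 : D.P 3 < D.P 5 := P_lt_P_add_two D h2 3 (by norm_num)
    rw [hk3, hk5] at h35
    have : k3 < k5 := by exact_mod_cast h35
    have h1 : (1 : ℚ) ≤ (k5 : ℚ) := by exact_mod_cast Nat.one_le_iff_ne_zero.mpr (by omega)
    rw [show 2 * 2 + 1 = 5 from rfl, hk5]
    push_cast
    linarith
  | succ n hn ih =>
    obtain ⟨k, hk⟩ := hint (2 * n + 1) (by omega)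
    obtain ⟨k', hk'⟩ := hint (2 * n + 1 + 2) (by omega)
    have hlt : D.P (2 * n + 1) < D.P (2 * n + 1 + 2) :=
      P_lt_P_add_two D h2 (2 * n + 1) (by omega)
    rw [hk, hk'] at hlt
    have hkk : k < k' := by exact_mod_cast hlt
    have hkk' : (k : ℚ) + 1 ≤ (k' : ℚ) := by exact_mod_cast hkk
    rw [show 2 * (n + 1) + 1 = 2 * n + 1 + 2 by ring, hk']
    rw [hk] at ih
    push_cast
    linarith
end
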